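/- Let u be a node. If an execution contains three transitions C_0 ↦ C_1, C_2 ↦ C_3 and C_4 ↦ C_5 (occurring in this order), which are three consecutive Increase moves of node u (u executes the Increase rule in each of them and no Increase in any transition strictly between them), then u executes the Reset rule in some transition occurring between C_0 and C_5. -/
import Mathlib


/-!
Formal model of the self-stabilizing maximal-matching algorithm in the
link-register model under read/write atomicity.

Nodes form a finite simple graph `G` on a vertex type `V` whose linear order
plays the role of the distinct identifiers.  A configuration records, for each
node `u`, its pointer `p u : Option V` (`none` = null), its lock variable
`m u : Fin 3`, and for each (directed) link a register `r u v : RegFlag × Fin 3`.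
-/

inductive RegFlag where
  | Idle | You | Other
deriving DecidableEq

abbrev RegVal : Type := RegFlag × Fin 3

inductive Rule (V : Type) where
  | write (a : V)
  | seduction (a : V)
  | marriage (a : V)
  | increase
  | reset
deriving DecidableEq

structure Config (V : Type) where
  p : V → Option V
  m : V → Fin 3
  r : V → V → RegVal

variable {V : Type}

def correctRegisterValue [DecidableEq V] (C : Config V) (u a : V) : RegVal :=
  match C.p u with
  | none => (RegFlag.Idle, 0)
  | some b => if b = a then (RegFlag.You, C.m u) else (RegFlag.Other, C.m u)

def PRabandonment [LinearOrder V] (C : Config V) (u : V) : Prop :=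
  ∃ v, C.p u = some v ∧
    (((C.r v u).1 ≠ RegFlag.You ∧ (v < u ∨ C.m u ≠ 0)) ∨
     (C.r v u = (RegFlag.Other, 2) ∧ u < v))

def PRreset [LinearOrder V] (C : Config V) (u : V) : Prop :=
  ∃ v, C.p u = some v ∧ (C.r v u).1 = RegFlag.You ∧
    ((C.m u = 0 ∧ (C.r v u).2 = 2) ∨
     (C.m u = 2 ∧ (C.r v u).2 = 0) ∨
     (C.m u = 0 ∧ (C.r v u).2 = 1 ∧ v < u) ∨
     (C.m u = 1 ∧ (C.r v u).2 = 0 ∧ u < v) ∨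
     (C.m u = 1 ∧ (C.r v u).2 = 2 ∧ u < v) ∨
     (C.m u = 2 ∧ (C.r v u).2 = 1 ∧ v < u))

/-- The guard of each rule of node `u` in configuration `C`. -/
def eligible [LinearOrder V] (G : SimpleGraph V) (C : Config V) (u : V) : Rule V → Prop
  | .write a => G.Adj u a ∧ C.r u a ≠ correctRegisterValue C u a
  | .seduction a => G.Adj u a ∧ C.p u = none ∧ C.r u a = correctRegisterValue C u a ∧
      C.r a u = (RegFlag.Idle, 0) ∧ u < a
  | .marriage a => G.Adj u a ∧ C.p u = none ∧ C.r u a = correctRegisterValue C u a ∧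
      C.r a u = (RegFlag.You, 0) ∧ a < u
  | .increase => ∃ v, C.p u = some v ∧ C.r u v = correctRegisterValue C u v ∧
      (C.r v u).1 = RegFlag.You ∧
      ((C.m u = 0 ∧ ((u < v ∧ (C.r v u).2 = 1) ∨ (v < u ∧ (C.r v u).2 = 0))) ∨
       (C.m u = 1 ∧ ((u < v ∧ (C.r v u).2 = 1) ∨ (v < u ∧ (C.r v u).2 = 2))))
  | .reset => ∃ v, C.p u = some v ∧ C.r u v = correctRegisterValue C u v ∧
      (PRabandonment C u ∨ PRreset C u)

/-- Simultaneous application of (at most) one rule per node.  `A u = some R`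
means node `u` executes rule `R`; each action only modifies the data owned by
the acting node. -/
def step [DecidableEq V] (C : Config V) (A : V → Option (Rule V)) : Config V where
  p u :=
    match A u with
    | some (Rule.seduction a) => some a
    | some (Rule.marriage a) => some a
    | some Rule.reset => none
    | _ => C.p u
  m u :=
    match A u with
    | some (Rule.seduction _) => 0
    | some (Rule.marriage _) => 0
    | some Rule.reset => 0
    | some Rule.increase => C.m u + 1
    | _ => C.m u
  r u a :=
    match A u with
    | some (Rule.write b) => if a = b then correctRegisterValue C u a else C.r u a
    | _ => C.r u a

/-- An execution `C_0, A_0, C_1, A_1, …, C_T`: at each transition `i < T`, a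
nonempty set of eligible rules (at most one per node) is executed
simultaneously. -/
structure Execution [LinearOrder V] (G : SimpleGraph V) where
  T : ℕ
  conf : ℕ → Config V
  act : ℕ → V → Option (Rule V)
  act_nonempty : ∀ i < T, ∃ u, (act i u).isSome
  act_eligible : ∀ i < T, ∀ u R, act i u = some R → eligible G (conf i) u R
  conf_succ : ∀ i < T, conf (i + 1) = step (conf i) (act i)

/-- A configuration is stable if no rule is eligible at any node. -/
def stableConfig [LinearOrder V] (G : SimpleGraph V) (C : Config V) : Prop :=
  ∀ u R, ¬ eligible G C u R

/-- The edge `(s,t)` (with `s < t` intended) is in state `(You, α, β)`. -/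
def edgeState (C : Config V) (s t : V) (α β : Fin 3) : Prop :=
  C.p s = some t ∧ C.p t = some s ∧ C.m s = α ∧ C.m t = β

def updatedCorrectState (C : Config V) (s t : V) (α β : Fin 3) : Prop :=
  edgeState C s t α β ∧ C.r s t = (RegFlag.You, α) ∧ C.r t s = (RegFlag.You, β) ∧
    ((α, β) = ((0 : Fin 3), (0 : Fin 3)) ∨ (α, β) = (0, 1) ∨ (α, β) = (1, 1) ∨
     (α, β) = (2, 1) ∨ (α, β) = (2, 2))

def toUpdateCorrectState (C : Config V) (s t : V) (α β : Fin 3) : Prop :=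
  edgeState C s t α β ∧
    ((((α, β) = ((0 : Fin 3), (1 : Fin 3)) ∨ (α, β) = (2, 2)) ∧
        C.r s t = (RegFlag.You, α) ∧ C.r t s = (RegFlag.You, β - 1)) ∨
     (((α, β) = ((1 : Fin 3), (1 : Fin 3)) ∨ (α, β) = (2, 1)) ∧
        C.r s t = (RegFlag.You, α - 1) ∧ C.r t s = (RegFlag.You, β)))

def correctState (C : Config V) (s t : V) (α β : Fin 3) : Prop :=
  updatedCorrectState C s t α β ∨ toUpdateCorrectState C s t α β

/-- Node `u` executes a `v`-rule in transition `k`: one of `Write(v)`,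
`Seduction(v)`, `Marriage(v)`, a `v`-`Increase` or a `v`-`Reset`. -/
def execVRule [LinearOrder V] {G : SimpleGraph V} (E : Execution G) (k : ℕ) (u v : V) : Prop :=
  k < E.T ∧
    (E.act k u = some (Rule.write v) ∨ E.act k u = some (Rule.seduction v) ∨
     E.act k u = some (Rule.marriage v) ∨
     ((E.act k u = some Rule.increase ∨ E.act k u = some Rule.reset) ∧
       (E.conf k).p u = some v))

/-- Among three consecutive `Increase` moves of a node `u`
(at transitions `i₁ < i₂ < i₃`, with no other `Increase` of `u` in between),
node `u` executes a `Reset` in some transition between `C_0 = conf i₁` and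
`C_5 = conf (i₃+1)`. -/
theorem stmt_10 {V : Type} [Fintype V] [LinearOrder V] (G : SimpleGraph V)
    (u : V) (E : Execution G) (i1 i2 i3 : ℕ)
    (h12 : i1 + 1 ≤ i2) (h23 : i2 + 1 ≤ i3) (h3T : i3 < E.T)
    (hi1 : E.act i1 u = some Rule.increase)
    (hi2 : E.act i2 u = some Rule.increase)
    (hi3 : E.act i3 u = some Rule.increase)
    (hcons : ∀ k, i1 < k → k < i3 → k ≠ i2 → E.act k u ≠ some Rule.increase) :
    ∃ k, i1 ≤ k ∧ k ≤ i3 ∧ E.act k u = some Rule.reset := by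
  by_contra hcon
  push_neg at hcon
  -- invariant: without increase/reset, m is constant and p stays non-null
  have key : ∀ i w, (E.conf i).p u = some w → ∀ j, i ≤ j → j ≤ i3 →
      (∀ k, i ≤ k → k < j → E.act k u ≠ some Rule.increase ∧ E.act k u ≠ some Rule.reset) →
      (E.conf j).m u = (E.conf i).m u ∧ ∃ w', (E.conf j).p u = some w' := by
    intro i w hw j hij hj hk
    induction j, hij using Nat.le_induction with
    | base => exact ⟨rfl, w, hw⟩
    | succ j hij ih =>
      obtain ⟨hm, w', hp⟩ := ih (Nat.le_of_succ_le hj)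
        (fun k h1 h2 => hk k h1 (Nat.lt_succ_of_lt h2))
      have hjT : j < E.T := lt_of_lt_of_le (Nat.lt_of_succ_le hj) (le_of_lt h3T)
      have hstep := E.conf_succ j hjT
      obtain ⟨hni, hnr⟩ := hk j hij (Nat.lt_succ_self j)
      rw [hstep]
      cases hA : E.act j u with
      | none => exact ⟨by simp [step, hA, hm], w', by simp [step, hA, hp]⟩
      | some R =>
        have hel := E.act_eligible j hjT u R hA
        cases R with
        | write a => exact ⟨by simp [step, hA, hm], w', by simp [step, hA, hp]⟩
        | seduction a => exact absurd hel.2.1 (by simp [hp])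
        | marriage a => exact absurd hel.2.1 (by simp [hp])
        | increase => exact absurd hA hni
        | reset => exact absurd hA hnr
  -- at an increase transition: m ∈ {0,1}, and after it m increases by 1 and p stays
  have hinc : ∀ k, k < E.T → E.act k u = some Rule.increase →
      ((E.conf k).m u = 0 ∨ (E.conf k).m u = 1) ∧
      (E.conf (k+1)).m u = (E.conf k).m u + 1 ∧
      ∃ w, (E.conf (k+1)).p u = some w := by
    intro k hkT hA
    have hel := E.act_eligible k hkT u _ hA
    obtain ⟨v, hpv, -, -, hcases⟩ := hel
    have hstep := E.conf_succ k hkT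
    refine ⟨?_, by rw [hstep]; simp [step, hA], v, by rw [hstep]; simp [step, hA, hpv]⟩
    rcases hcases with ⟨h0, -⟩ | ⟨h1, -⟩
    · exact Or.inl h0
    · exact Or.inr h1
  have h1T : i1 < E.T := lt_of_lt_of_le (by omega) (le_of_lt h3T) |>.trans_le (le_refl _)
  have h2T : i2 < E.T := by omega
  obtain ⟨hm1, hm1', w1, hp1⟩ := hinc i1 (by omega) hi1
  obtain ⟨hm2, hm2', w2, hp2⟩ := hinc i2 h2T hi2
  obtain ⟨hm3, -, -⟩ := hinc i3 h3T hi3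
  -- from i1+1 to i2
  obtain ⟨heq12, -⟩ := key (i1+1) w1 hp1 i2 h12 (by omega)
    (fun k hk1 hk2 => ⟨hcons k (by omega) (by omega) (by omega),
      hcon k (by omega) (by omega)⟩)
  -- from i2+1 to i3
  obtain ⟨heq23, -⟩ := key (i2+1) w2 hp2 i3 h23 (le_refl _)
    (fun k hk1 hk2 => ⟨hcons k (by omega) (by omega) (by omega),
      hcon k (by omega) (by omega)⟩)
  rw [heq12, hm1'] at hm2
  rw [heq23, hm2', heq12, hm1'] at hm3
  rcases hm1 with h | h <;> rw [h] at hm2 hm3 <;> revert hm2 hm3 <;> decide
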